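/- For any 0 ≤ ν ≤ μ, any stepsize h > 0, and all x, y ∈ E, (1/n) Σ_{i=1}^n ‖y − h(∇f(x) + ∇f_i(y) − ∇f_i(x)) − x*‖² ≤ (1 − νh)‖y − x*‖² − 2h(1 − 2Lh)(f(y) − f(x*)) + 4(L − μ)h²(f(x) − f(x*)). -/

import Mathlib

/-!
Expanding the square, the estimators `∇f x + ∇f_i y - ∇f_i x` average to `∇f y`, so the cross
term is controlled by strong convexity of `f` between `y` and `x*`. For the second moment, write
the estimator as `(∇f_i y - ∇f_i x*) - (∇f_i x - ∇f_i x* - ∇f x)`: co-coercivity of the convex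
`L`-smooth `f_i`, summed using `∑ i, ∇f_i x* = 0`, bounds the mean square of `∇f_i z - ∇f_i x*`
by `2L (f z - f x*)`; the second bracket is its centred version, so its mean square is smaller by
`‖∇f x‖² ≥ 2μ (f x - f x*)` (Polyak–Łojasiewicz).
-/

open scoped RealInnerProductSpace

section InnerProductSpace

variable {E : Type*} [NormedAddCommGroup E] [InnerProductSpace ℝ E] {ι : Type*}

lemma sum_norm_sub_smul_sq (s : Finset ι) (r : E) (h : ℝ) (v : ι → E) :
    ∑ i ∈ s, ‖r - h • v i‖ ^ 2 =
      s.card * ‖r‖ ^ 2 - 2 * h * ⟪∑ i ∈ s, v i, r⟫ + h ^ 2 * ∑ i ∈ s, ‖v i‖ ^ 2 := by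
  simp only [norm_sub_sq_real, real_inner_smul_right, norm_smul, mul_pow, Real.norm_eq_abs,
    sq_abs, Finset.sum_add_distrib, Finset.sum_sub_distrib, Finset.sum_const, nsmul_eq_mul,
    ← Finset.mul_sum, real_inner_comm r, inner_sum]
  ring

lemma sum_norm_sub_sq_of_sum_eq (s : Finset ι) (b : ι → E) (g : E)
    (hb : ∑ i ∈ s, b i = (s.card : ℝ) • g) :
    ∑ i ∈ s, ‖b i - g‖ ^ 2 = ∑ i ∈ s, ‖b i‖ ^ 2 - s.card * ‖g‖ ^ 2 := by
  simp only [norm_sub_sq_real, Finset.sum_add_distrib, Finset.sum_sub_distrib, ← Finset.mul_sum,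
    ← sum_inner, hb, Finset.sum_const, nsmul_eq_mul,
    real_inner_smul_left, real_inner_self_eq_norm_sq]
  ring

lemma sum_norm_add_sub_sq_le (s : Finset ι) (a b c : ι → E) (g : E)
    (hbc : ∑ i ∈ s, (b i - c i) = (s.card : ℝ) • g) :
    ∑ i ∈ s, ‖g + a i - b i‖ ^ 2 ≤
      2 * ∑ i ∈ s, ‖a i - c i‖ ^ 2 + 2 * (∑ i ∈ s, ‖b i - c i‖ ^ 2 - s.card * ‖g‖ ^ 2) := by
  rw [← sum_norm_sub_sq_of_sum_eq s _ g hbc, Finset.mul_sum, Finset.mul_sum,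
    ← Finset.sum_add_distrib]
  refine Finset.sum_le_sum fun i _ => ?_
  calc ‖g + a i - b i‖ ^ 2 = ‖(a i - c i) - (b i - c i - g)‖ ^ 2 := by congr 2; abel
    _ ≤ (‖a i - c i‖ + ‖b i - c i - g‖) ^ 2 := by gcongr; exact norm_sub_le _ _
    _ ≤ 2 * ‖a i - c i‖ ^ 2 + 2 * ‖b i - c i - g‖ ^ 2 := by
      linarith [add_sq_le (a := ‖a i - c i‖) (b := ‖b i - c i - g‖)]

/-- Co-coercivity of a convex `L`-smooth function with (sub)gradient map `g`: test smoothness at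
`z` and convexity at `w` against the point `z - L⁻¹ • (g z - g w)`. -/
lemma norm_sub_sq_le_of_convex_of_smooth {L : ℝ} (hL : 0 < L) (φ : E → ℝ) (g : E → E)
    (hconv : ∀ x z, φ x + ⟪g x, z - x⟫ ≤ φ z)
    (hsmooth : ∀ x z, φ z ≤ φ x + ⟪g x, z - x⟫ + L / 2 * ‖z - x‖ ^ 2) (w z : E) :
    ‖g z - g w‖ ^ 2 ≤ 2 * L * (φ z - φ w - ⟪g w, z - w⟫) := by
  set d := g z - g w
  have hlow := hconv w (z - L⁻¹ • d)
  have hup := hsmooth z (z - L⁻¹ • d)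
  have huw : z - L⁻¹ • d - w = (z - w) - L⁻¹ • d := sub_right_comm _ _ _
  have huz : z - L⁻¹ • d - z = -(L⁻¹ • d) := by abel
  rw [huw, inner_sub_right, real_inner_smul_right] at hlow
  rw [huz, inner_neg_right, real_inner_smul_right, norm_neg, norm_smul, Real.norm_eq_abs,
    abs_of_pos (inv_pos.2 hL)] at hup
  have hd : L⁻¹ * ⟪g z, d⟫ - L⁻¹ * ⟪g w, d⟫ = L⁻¹ * ‖d‖ ^ 2 := by
    rw [← mul_sub, ← inner_sub_left, real_inner_self_eq_norm_sq]
  have hquad : L / 2 * (L⁻¹ * ‖d‖) ^ 2 = L⁻¹ / 2 * ‖d‖ ^ 2 := by field_simp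
  calc ‖d‖ ^ 2 = 2 * L * (L⁻¹ / 2 * ‖d‖ ^ 2) := by field_simp
    _ ≤ 2 * L * (φ z - φ w - ⟪g w, z - w⟫) := by gcongr; linarith

lemma sum_norm_sub_sq_le_of_convex_of_smooth (s : Finset ι) {L : ℝ} (hL : 0 < L)
    (φ : ι → E → ℝ) (g : ι → E → E) (hconv : ∀ i x z, φ i x + ⟪g i x, z - x⟫ ≤ φ i z)
    (hsmooth : ∀ i x z, φ i z ≤ φ i x + ⟪g i x, z - x⟫ + L / 2 * ‖z - x‖ ^ 2) (w z : E) :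
    ∑ i ∈ s, ‖g i z - g i w‖ ^ 2 ≤
      2 * L * (∑ i ∈ s, φ i z - ∑ i ∈ s, φ i w - ⟪∑ i ∈ s, g i w, z - w⟫) := by
  rw [sum_inner, ← Finset.sum_sub_distrib, ← Finset.sum_sub_distrib, Finset.mul_sum]
  exact Finset.sum_le_sum fun i _ =>
    norm_sub_sq_le_of_convex_of_smooth hL (φ i) (g i) (hconv i) (hsmooth i) w z

lemma two_mul_sub_le_norm_sq_of_quadratic_lower_bound {μ : ℝ} (hμ : 0 ≤ μ) (φ : E → ℝ)
    (g x x₀ : E) (hlow : φ x + ⟪g, x₀ - x⟫ + μ / 2 * ‖x₀ - x‖ ^ 2 ≤ φ x₀) :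
    2 * μ * (φ x - φ x₀) ≤ ‖g‖ ^ 2 := by
  have hcs : -⟪g, x₀ - x⟫ ≤ ‖g‖ * ‖x₀ - x‖ := by
    rw [← inner_neg_right, neg_sub, norm_sub_rev]; exact real_inner_le_norm _ _
  nlinarith [sq_nonneg (‖g‖ - μ * ‖x₀ - x‖), mul_le_mul_of_nonneg_left hcs hμ]

end InnerProductSpace

lemma gradient_const_mul_sum {E : Type*} [NormedAddCommGroup E] [InnerProductSpace ℝ E]
    [CompleteSpace E] {ι : Type*} [Fintype ι] (f : ι → E → ℝ)
    (hdiff : ∀ i, Differentiable ℝ (f i)) (c : ℝ) (w : E) :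
    gradient (fun x => c * ∑ i, f i x) w = c • ∑ i, gradient (f i) w := by
  have hderiv : HasFDerivAt (fun x => c * ∑ i, f i x)
      (c • ∑ i, InnerProductSpace.toDual ℝ E (gradient (f i) w)) w :=
    (HasFDerivAt.fun_sum fun i _ => (hdiff i w).hasGradientAt.hasFDerivAt).const_mul c
  rw [hderiv.hasGradientAt.gradient, map_smul, map_sum]
  simp only [LinearIsometryEquiv.symm_apply_apply]

lemma sum_apply_eq_mul_avg {α : Type*} {n : ℕ} (hn : 0 < n) {f : Fin n → α → ℝ}
    {favg : α → ℝ} (hfavg : favg = fun x => (1 / (n : ℝ)) * ∑ i, f i x) (w : α) :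
    ∑ i, f i w = n * favg w := by
  rw [hfavg, ← mul_assoc, mul_one_div_cancel (by positivity), one_mul]

section FiniteSum

variable {E : Type*} [NormedAddCommGroup E] [InnerProductSpace ℝ E] [CompleteSpace E]
  {n : ℕ} {f : Fin n → E → ℝ} {favg : E → ℝ}

lemma sum_gradient_eq_smul_gradient_avg (hn : 0 < n) (hdiff : ∀ i, Differentiable ℝ (f i))
    (hfavg : favg = fun x => (1 / (n : ℝ)) * ∑ i, f i x) (w : E) :
    ∑ i, gradient (f i) w = (n : ℝ) • gradient favg w := by
  rw [hfavg, gradient_const_mul_sum f hdiff, smul_smul, mul_one_div_cancel (by positivity),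
    one_smul]

lemma sum_norm_gradient_sub_sq_le (hn : 0 < n) {L : ℝ} (hL : 0 < L)
    (hdiff : ∀ i, Differentiable ℝ (f i))
    (hconv : ∀ i, ∀ x z : E, f i x + ⟪gradient (f i) x, z - x⟫ ≤ f i z)
    (hsmooth : ∀ i, ∀ x z : E,
      f i z ≤ f i x + ⟪gradient (f i) x, z - x⟫ + L / 2 * ‖z - x‖ ^ 2)
    (hfavg : favg = fun x => (1 / (n : ℝ)) * ∑ i, f i x) {xstar : E}
    (hstar : gradient favg xstar = 0) (z : E) :
    ∑ i, ‖gradient (f i) z - gradient (f i) xstar‖ ^ 2 ≤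
      2 * L * (n * (favg z - favg xstar)) := by
  have := sum_norm_sub_sq_le_of_convex_of_smooth Finset.univ hL f (fun i => gradient (f i))
    hconv hsmooth xstar z
  rwa [sum_gradient_eq_smul_gradient_avg hn hdiff hfavg, hstar, smul_zero, inner_zero_left,
    sub_zero, sum_apply_eq_mul_avg hn hfavg, sum_apply_eq_mul_avg hn hfavg, ← mul_sub] at this

lemma sum_norm_variance_reduced_gradient_sq_le (hn : 0 < n) {L μ : ℝ} (hL : 0 < L)
    (hμ : 0 ≤ μ) (hdiff : ∀ i, Differentiable ℝ (f i))
    (hconv : ∀ i, ∀ x z : E, f i x + ⟪gradient (f i) x, z - x⟫ ≤ f i z)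
    (hsmooth : ∀ i, ∀ x z : E,
      f i z ≤ f i x + ⟪gradient (f i) x, z - x⟫ + L / 2 * ‖z - x‖ ^ 2)
    (hfavg : favg = fun x => (1 / (n : ℝ)) * ∑ i, f i x)
    (hstrong : ∀ x z : E,
      favg x + ⟪gradient favg x, z - x⟫ + μ / 2 * ‖z - x‖ ^ 2 ≤ favg z)
    {xstar : E} (hstar : gradient favg xstar = 0) (x y : E) :
    ∑ i, ‖gradient favg x + gradient (f i) y - gradient (f i) x‖ ^ 2 ≤
      n * (4 * L * (favg y - favg xstar) + 4 * (L - μ) * (favg x - favg xstar)) := by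
  have hvar := sum_norm_add_sub_sq_le Finset.univ (fun i => gradient (f i) y)
    (fun i => gradient (f i) x) (fun i => gradient (f i) xstar) (gradient favg x)
    (by simp [Finset.sum_sub_distrib, sum_gradient_eq_smul_gradient_avg hn hdiff hfavg, hstar])
  have hcoer := sum_norm_gradient_sub_sq_le hn hL hdiff hconv hsmooth hfavg hstar
  have hpl := two_mul_sub_le_norm_sq_of_quadratic_lower_bound hμ favg _ x xstar
    (hstrong x xstar)
  rw [Finset.card_univ, Fintype.card_fin] at hvar
  linarith [hcoer x, hcoer y, mul_le_mul_of_nonneg_left hpl (Nat.cast_nonneg n)]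

end FiniteSum

theorem s2gd_distance_recursion_general
    {E : Type*} [NormedAddCommGroup E] [InnerProductSpace ℝ E] [CompleteSpace E]
    {n : ℕ} (hn : 0 < n) (f : Fin n → E → ℝ) {L μ : ℝ} (hL : 0 < L)
    (hdiff : ∀ i, Differentiable ℝ (f i))
    (hconv : ∀ i, ∀ x z : E, f i x + ⟪gradient (f i) x, z - x⟫ ≤ f i z)
    (hsmooth : ∀ i, ∀ x z : E,
      f i z ≤ f i x + ⟪gradient (f i) x, z - x⟫ + L / 2 * ‖z - x‖ ^ 2)
    (favg : E → ℝ) (hfavg : favg = fun x => (1 / (n : ℝ)) * ∑ i, f i x)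
    (hstrong : ∀ x z : E,
      favg x + ⟪gradient favg x, z - x⟫ + μ / 2 * ‖z - x‖ ^ 2 ≤ favg z)
    (xstar : E)
    (hstar : gradient favg xstar = 0)
    {ν h : ℝ} (hν0 : 0 ≤ ν) (hνμ : ν ≤ μ) (hh : 0 < h) (x y : E) :
    (1 / (n : ℝ)) *
        ∑ i, ‖y - h • (gradient favg x + gradient (f i) y - gradient (f i) x) - xstar‖ ^ 2 ≤
      (1 - ν * h) * ‖y - xstar‖ ^ 2 - 2 * h * (1 - 2 * L * h) * (favg y - favg xstar) +
        4 * (L - μ) * h ^ 2 * (favg x - favg xstar) := by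
  have hn' : (0 : ℝ) < n := by exact_mod_cast hn
  have hmean : ∑ i, (gradient favg x + gradient (f i) y - gradient (f i) x) =
      (n : ℝ) • gradient favg y := by
    simp [Finset.sum_sub_distrib, Finset.sum_add_distrib,
      sum_gradient_eq_smul_gradient_avg hn hdiff hfavg, ← Nat.cast_smul_eq_nsmul ℝ]
  have hdescent : favg y - favg xstar + μ / 2 * ‖y - xstar‖ ^ 2 ≤
      ⟪gradient favg y, y - xstar⟫ := by
    have := hstrong y xstar
    rw [← neg_sub y xstar, inner_neg_right, norm_neg] at this
    linarith
  have hvar := sum_norm_variance_reduced_gradient_sq_le hn hL (hν0.trans hνμ) hdiff hconv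
    hsmooth hfavg hstrong hstar x y
  have hshrink : 0 ≤ n * ((μ - ν) * h * ‖y - xstar‖ ^ 2) := by
    have := sub_nonneg.2 hνμ
    positivity
  simp_rw [sub_right_comm y _ xstar]
  rw [sum_norm_sub_smul_sq, hmean, real_inner_smul_left, Finset.card_univ, Fintype.card_fin,
    one_div_mul_eq_div, div_le_iff₀ hn']
  linarith [mul_le_mul_of_nonneg_left hvar (sq_nonneg h),
    mul_le_mul_of_nonneg_left hdescent (by positivity : (0 : ℝ) ≤ 2 * h * n)]

/-- the expected-distance recursion of S2GD. For `0 ≤ ν ≤ μ` and stepsize `h > 0`,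
`(1/n) ∑ i, ‖y − h(∇f x + ∇f_i y − ∇f_i x) − x*‖²
  ≤ (1 − νh)‖y − x*‖² − 2h(1 − 2Lh)(f y − f x*) + 4(L − μ)h²(f x − f x*)`. -/
theorem s2gd_distance_recursion
    {E : Type*} [NormedAddCommGroup E] [InnerProductSpace ℝ E] [CompleteSpace E]
    {n : ℕ} (hn : 0 < n) (f : Fin n → E → ℝ) {L μ : ℝ} (hL : 0 < L)
    (hμpos : 0 < μ) (hμL : μ ≤ L)
    (hdiff : ∀ i, Differentiable ℝ (f i))
    (hconv : ∀ i, ∀ x z : E, f i x + ⟪gradient (f i) x, z - x⟫ ≤ f i z)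
    (hsmooth : ∀ i, ∀ x z : E,
      f i z ≤ f i x + ⟪gradient (f i) x, z - x⟫ + L / 2 * ‖z - x‖ ^ 2)
    (favg : E → ℝ) (hfavg : favg = fun x => (1 / (n : ℝ)) * ∑ i, f i x)
    (hstrong : ∀ x z : E,
      favg x + ⟪gradient favg x, z - x⟫ + μ / 2 * ‖z - x‖ ^ 2 ≤ favg z)
    (xstar : E) (hmin : ∀ z : E, favg xstar ≤ favg z)
    (hstar : gradient favg xstar = 0)
    {ν h : ℝ} (hν0 : 0 ≤ ν) (hνμ : ν ≤ μ) (hh : 0 < h) (x y : E) :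
    (1 / (n : ℝ)) *
        ∑ i, ‖y - h • (gradient favg x + gradient (f i) y - gradient (f i) x) - xstar‖ ^ 2 ≤
      (1 - ν * h) * ‖y - xstar‖ ^ 2 - 2 * h * (1 - 2 * L * h) * (favg y - favg xstar) +
        4 * (L - μ) * h ^ 2 * (favg x - favg xstar) :=
  s2gd_distance_recursion_general hn f hL hdiff hconv hsmooth favg hfavg hstrong xstar hstar hν0 hνμ
    hh x y
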